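/- (Spectral equivalence of the system operator and the quadratic pencil) For every ζ ∈ ℂ, det(ζ·1_{2N} − A(β)) = det C(ζ,β) / det α. Consequently the spectrum of the system operator equals the spectrum of the pencil: σ(A(β)) = { ζ ∈ ℂ : det C(ζ,β) = 0 }. -/

import Mathlib

open Matrix
open scoped ComplexOrder

noncomputable section

variable {N : ℕ}

/-- A real matrix viewed as a complex matrix. -/
def cm (M : Matrix (Fin N) (Fin N) ℝ) : Matrix (Fin N) (Fin N) ℂ :=
  M.map Complex.ofReal

/-- The quadratic matrix pencil `C(ζ,β) = ζ²α + iζ(2θ + βR) − η`. -/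
def pencil (α η θ R : Matrix (Fin N) (Fin N) ℝ) (β : ℝ) (ζ : ℂ) :
    Matrix (Fin N) (Fin N) ℂ :=
  ζ ^ 2 • cm α + (Complex.I * ζ) • ((2 : ℂ) • cm θ + (β : ℂ) • cm R) - cm η

/-- The positive semidefinite square root (Mathlib's removed `Matrix.PosSemidef.sqrt`,
restored with its old definition). -/
def Matrix.PosSemidef.sqrt {n : Type*} [Fintype n] [DecidableEq n] {A : Matrix n n ℂ}
    (hA : A.PosSemidef) : Matrix n n ℂ :=
  hA.1.eigenvectorUnitary.1 * diagonal ((↑) ∘ (√·) ∘ hA.1.eigenvalues) *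
    (star hA.1.eigenvectorUnitary : Matrix n n ℂ)

/-- `K_p = (√α)⁻¹`. -/
def Kp {α : Matrix (Fin N) (Fin N) ℝ} (hα : (cm α).PosDef) : Matrix (Fin N) (Fin N) ℂ :=
  (hα.posSemidef.sqrt)⁻¹

/-- `Φ = √η · K_p`. -/
def Phi {α η : Matrix (Fin N) (Fin N) ℝ} (hα : (cm α).PosDef) (hη : (cm η).PosSemidef) :
    Matrix (Fin N) (Fin N) ℂ :=
  hη.sqrt * Kp hα

/-- `R̃ = K_p R K_p`. -/
def Rt (R : Matrix (Fin N) (Fin N) ℝ) {α : Matrix (Fin N) (Fin N) ℝ} (hα : (cm α).PosDef) :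
    Matrix (Fin N) (Fin N) ℂ :=
  Kp hα * cm R * Kp hα

/-- `Ω_p = −2i K_p θ K_p`. -/
def Omp (θ : Matrix (Fin N) (Fin N) ℝ) {α : Matrix (Fin N) (Fin N) ℝ} (hα : (cm α).PosDef) :
    Matrix (Fin N) (Fin N) ℂ :=
  ((-2 : ℂ) * Complex.I) • (Kp hα * cm θ * Kp hα)

/-- `Ω = [[Ω_p, −iΦᵀ],[iΦ, 0]]`. -/
def Om (θ : Matrix (Fin N) (Fin N) ℝ) {α η : Matrix (Fin N) (Fin N) ℝ}
    (hα : (cm α).PosDef) (hη : (cm η).PosSemidef) :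
    Matrix (Fin N ⊕ Fin N) (Fin N ⊕ Fin N) ℂ :=
  fromBlocks (Omp θ hα) ((-Complex.I) • (Phi hα hη)ᵀ) (Complex.I • Phi hα hη) 0

/-- `B = [[R̃, 0],[0, 0]]`. -/
def Bm (R : Matrix (Fin N) (Fin N) ℝ) {α : Matrix (Fin N) (Fin N) ℝ} (hα : (cm α).PosDef) :
    Matrix (Fin N ⊕ Fin N) (Fin N ⊕ Fin N) ℂ :=
  fromBlocks (Rt R hα) 0 0 0

/-- The system operator `A(β) = Ω − iβB`. -/
def Asys (θ R : Matrix (Fin N) (Fin N) ℝ) {α η : Matrix (Fin N) (Fin N) ℝ}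
    (hα : (cm α).PosDef) (hη : (cm η).PosSemidef) (β : ℝ) :
    Matrix (Fin N ⊕ Fin N) (Fin N ⊕ Fin N) ℂ :=
  Om θ hα hη - (Complex.I * (β : ℂ)) • Bm R hα

/-- The ℓ²→ℓ² operator norm of a complex matrix. -/
def opN {n : Type*} [Fintype n] [DecidableEq n] (M : Matrix n n ℂ) : ℝ :=
  ‖Matrix.toEuclideanCLM (𝕜 := ℂ) M‖

/-- `ω_max = ‖Ω‖`. -/
def omegaMax (θ : Matrix (Fin N) (Fin N) ℝ) {α η : Matrix (Fin N) (Fin N) ℝ}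
    (hα : (cm α).PosDef) (hη : (cm η).PosSemidef) : ℝ :=
  opN (Om θ hα hη)

/-- `b_min`, the smallest nonzero eigenvalue of `B`. -/
def bMin (R : Matrix (Fin N) (Fin N) ℝ) {α : Matrix (Fin N) (Fin N) ℝ} (hα : (cm α).PosDef) : ℝ :=
  sInf {r : ℝ | r ≠ 0 ∧ (r : ℂ) ∈ spectrum ℂ (Bm R hα)}


/-!
In block form `ζ • 1 - A(β) = [[X, iΦᵀ], [-iΦ, ζ • 1]]` with `X = ζ • 1 - Ω_p + iβR̃`, and a
Schur-complement computation gives `det [[X, Y], [Z, ζ • 1]] = det (ζ • X - Y Z)` for every `ζ`: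
for `ζ` regular this follows by multiplying with `[[ζ • 1, 0], [-Z, 1]]`, and it then holds for all
`ζ` as a polynomial identity. Since `(√α)ᵀ = √α` and `(√η)ᵀ = √η`, we get `ΦᵀΦ = K_p η K_p`, so
`ζ • X - (iΦᵀ)(-iΦ) = K_p C(ζ,β) K_p`, and `(det K_p)² = 1 / det α`.
-/

section BlockDeterminant

variable {n K : Type*} [Fintype n] [DecidableEq n]

theorem Matrix.det_fromBlocks_smul_one₂₂_of_isRegular [CommRing K] (A B C : Matrix n n K) {z : K}
    (hz : IsRegular z) : (fromBlocks A B C (z • 1)).det = (z • A - B * C).det := by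
  have hmul : fromBlocks A B C (z • 1) * fromBlocks (z • 1) 0 (-C) 1 =
      fromBlocks (z • A - B * C) B 0 (z • 1) := by
    simp [fromBlocks_multiply, sub_eq_add_neg]
  have hdet := congrArg det hmul
  rw [det_mul, det_fromBlocks_zero₁₂, det_fromBlocks_zero₂₁] at hdet
  simpa using (hz.pow (Fintype.card n)).right.eq_iff.mp (by simpa [det_smul] using hdet)

theorem Matrix.det_fromBlocks_smul_one₂₂ [CommRing K] (A B C : Matrix n n K) (z : K) :
    (fromBlocks A B C (z • 1)).det = (z • A - B * C).det := by
  have hX := det_fromBlocks_smul_one₂₂_of_isRegular (A.map Polynomial.C) (B.map Polynomial.C)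
    (C.map Polynomial.C) (Polynomial.isRegular_X (R := K))
  have hz := congrArg (Polynomial.evalRingHom z) hX
  simp only [RingHom.map_det] at hz
  convert hz using 2
  · ext (i | i) (j | j) <;> simp [Matrix.one_apply, apply_ite (Polynomial.eval z)]
  · ext i j
    simp [Matrix.mul_apply, Polynomial.eval_finsetSum, mul_comm z]

theorem Matrix.mem_spectrum_iff_det_smul_one_sub_eq_zero [Field K] (M : Matrix n n K) (z : K) :
    z ∈ spectrum K M ↔ (z • 1 - M).det = 0 := by
  rw [spectrum.mem_iff, Algebra.algebraMap_eq_smul_one, isUnit_iff_isUnit_det,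
    isUnit_iff_ne_zero, not_not]

end BlockDeterminant

section Sqrt

variable {n : Type*} [Fintype n] [DecidableEq n] {M : Matrix n n ℂ}

open scoped MatrixOrder

theorem Matrix.PosSemidef.sqrt_eq_cfcSqrt (hM : M.PosSemidef) : hM.sqrt = CFC.sqrt M := by
  rw [CFC.sqrt_eq_cfc, cfc_nnreal_eq_real _ M, hM.1.cfc_eq]
  simp only [IsHermitian.cfc, Matrix.PosSemidef.sqrt, Unitary.conjStarAlgAut_apply]
  congr 3
  funext i
  simp [Real.coe_toNNReal', hM.eigenvalues_nonneg i]

theorem Matrix.PosSemidef.sqrt_mul_self (hM : M.PosSemidef) : hM.sqrt * hM.sqrt = M := by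
  rw [hM.sqrt_eq_cfcSqrt]
  exact CFC.sqrt_mul_sqrt_self M hM.nonneg

theorem Matrix.PosSemidef.transpose_sqrt (hM : M.PosSemidef) (h : Mᵀ = M) :
    hM.sqrtᵀ = hM.sqrt := by
  rw [hM.sqrt_eq_cfcSqrt, eq_comm, CFC.sqrt_eq_iff _ _ hM.nonneg
    (CFC.sqrt_nonneg M).posSemidef.transpose.nonneg, ← transpose_mul, CFC.sqrt_mul_sqrt_self M
    hM.nonneg, h]

theorem Matrix.PosDef.isUnit_det_sqrt (hM : M.PosDef) : IsUnit hM.posSemidef.sqrt.det := by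
  refine isUnit_iff_ne_zero.mpr fun h ↦ hM.det_pos.ne' ?_
  rw [← hM.posSemidef.sqrt_mul_self, det_mul, h, zero_mul]

end Sqrt

section SystemOperator

open Complex

variable {α η : Matrix (Fin N) (Fin N) ℝ} (hα : (cm α).PosDef) (hη : (cm η).PosSemidef)

theorem transpose_cm_of_isHermitian {M : Matrix (Fin N) (Fin N) ℝ} (h : (cm M).IsHermitian) :
    (cm M)ᵀ = cm M := by
  conv_rhs => rw [← h.eq]
  ext i j
  simp [cm]

theorem Kp_transpose : (Kp hα)ᵀ = Kp hα := by
  rw [Kp, transpose_nonsing_inv,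
    hα.posSemidef.transpose_sqrt (transpose_cm_of_isHermitian hα.isHermitian)]

theorem Kp_mul_cm_mul_Kp : Kp hα * cm α * Kp hα = 1 := by
  rw [← hα.posSemidef.sqrt_mul_self, Kp, ← Matrix.mul_assoc,
    nonsing_inv_mul _ hα.isUnit_det_sqrt, Matrix.one_mul, mul_nonsing_inv _ hα.isUnit_det_sqrt]

theorem det_Kp_mul_det_Kp : (Kp hα).det * (Kp hα).det = ((cm α).det)⁻¹ := by
  have h := congrArg det (Kp_mul_cm_mul_Kp hα)
  rw [det_mul, det_mul, det_one] at h
  exact eq_inv_of_mul_eq_one_left (by rw [← h]; ring)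

theorem Phi_transpose_mul_Phi : (Phi hα hη)ᵀ * Phi hα hη = Kp hα * cm η * Kp hα := by
  rw [Phi, transpose_mul, Kp_transpose, hη.transpose_sqrt (transpose_cm_of_isHermitian hη.1),
    Matrix.mul_assoc, ← Matrix.mul_assoc hη.sqrt, hη.sqrt_mul_self, Matrix.mul_assoc]

variable (θ R : Matrix (Fin N) (Fin N) ℝ) (β : ℝ) (ζ : ℂ)

theorem smul_one_sub_Asys : ζ • 1 - Asys θ R hα hη β =
    fromBlocks (ζ • 1 - Omp θ hα + (I * β) • Rt R hα) (I • (Phi hα hη)ᵀ) ((-I) • Phi hα hη)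
      (ζ • 1) := by
  simp only [Asys, Om, Bm, ← fromBlocks_one, sub_eq_add_neg, fromBlocks_smul, fromBlocks_neg,
    fromBlocks_add]
  congr 1 <;> simp only [smul_zero, neg_zero, add_zero, zero_add, neg_smul, neg_add_rev, neg_neg]
  abel

theorem Kp_mul_pencil_mul_Kp : Kp hα * pencil α η θ R β ζ * Kp hα =
    ζ • (ζ • 1 - Omp θ hα + (I * β) • Rt R hα) - (I • (Phi hα hη)ᵀ) * ((-I) • Phi hα hη) := by
  rw [Matrix.smul_mul, Matrix.mul_smul, smul_smul, mul_neg, I_mul_I, neg_neg, one_smul,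
    Phi_transpose_mul_Phi, pencil, Omp, Rt, ← Kp_mul_cm_mul_Kp hα]
  simp only [Matrix.mul_add, Matrix.add_mul, Matrix.mul_sub, Matrix.sub_mul,
    Matrix.smul_mul, Matrix.mul_smul, smul_add, smul_sub, smul_smul, Matrix.mul_assoc]
  module

theorem det_smul_one_sub_Asys :
    (ζ • 1 - Asys θ R hα hη β).det = (pencil α η θ R β ζ).det / (cm α).det := by
  rw [smul_one_sub_Asys, det_fromBlocks_smul_one₂₂, ← Kp_mul_pencil_mul_Kp, det_mul, det_mul,
    mul_right_comm, det_Kp_mul_det_Kp, div_eq_inv_mul]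

end SystemOperator

theorem spectral_equivalence_general
    {N : ℕ}
    (α η θ R : Matrix (Fin N) (Fin N) ℝ)
    (hα : (cm α).PosDef) (hη : (cm η).PosSemidef)
    (β : ℝ) :
    (∀ ζ : ℂ,
      (ζ • (1 : Matrix (Fin N ⊕ Fin N) (Fin N ⊕ Fin N) ℂ) - Asys θ R hα hη β).det =
        (pencil α η θ R β ζ).det / (cm α).det) ∧
    spectrum ℂ (Asys θ R hα hη β) = {ζ : ℂ | (pencil α η θ R β ζ).det = 0} := by
  refine ⟨det_smul_one_sub_Asys hα hη θ R β, Set.ext fun ζ ↦ ?_⟩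
  rw [Set.mem_ofPred_eq, mem_spectrum_iff_det_smul_one_sub_eq_zero, det_smul_one_sub_Asys,
    div_eq_zero_iff, or_iff_left hα.det_pos.ne']

/-- **Spectral equivalence of the system operator and the quadratic pencil.**
`det(ζ·1 − A(β)) = det C(ζ,β) / det α` for all `ζ`, and hence
`σ(A(β)) = {ζ : det C(ζ,β) = 0}`. -/
theorem spectral_equivalence
    {N : ℕ} (hN : 1 ≤ N)
    (α η θ R : Matrix (Fin N) (Fin N) ℝ)
    (hα : (cm α).PosDef) (hη : (cm η).PosSemidef)
    (hθ : θᵀ = -θ) (hR : (cm R).PosSemidef)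
    (β : ℝ) (hβ : 0 ≤ β) :
    (∀ ζ : ℂ,
      (ζ • (1 : Matrix (Fin N ⊕ Fin N) (Fin N ⊕ Fin N) ℂ) - Asys θ R hα hη β).det =
        (pencil α η θ R β ζ).det / (cm α).det) ∧
    spectrum ℂ (Asys θ R hα hη β) = {ζ : ℂ | (pencil α η θ R β ζ).det = 0} :=
  spectral_equivalence_general α η θ R hα hη β
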